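/- arXiv:2001.03572 — 3 statements merged into one kernel-verified Lean document; each statement's English description precedes it below -/
import Mathlib

section
/- Let t₀ ≠ t_f be real numbers, let y₀, y_f, v₀, v_f ∈ ℝ, and let g : ℝ → ℝ be differentiable. Define y(t) = g(t) + Ω₁(t)(y₀ − g(t₀)) + Ω₂(t)(y_f − g(t_f)) + Ω₃(t)(v₀ − g′(t₀)) + Ω₄(t)(v_f − g′(t_f)). Then y is differentiable and satisfies the four boundary constraints y(t₀) = y₀, y(t_f) = y_f, y′(t₀) = v₀, and y′(t_f) = v_f. -/
/-- TFC switching function Ω₁ for two-point BVP constraints. -/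
noncomputable def Omega1 (t₀ t_f t : ℝ) : ℝ :=
  1 + 2 * (t - t₀) ^ 3 / (t_f - t₀) ^ 3 - 3 * (t - t₀) ^ 2 / (t_f - t₀) ^ 2

/-- TFC switching function Ω₂ for two-point BVP constraints. -/
noncomputable def Omega2 (t₀ t_f t : ℝ) : ℝ :=
  -(2 * (t - t₀) ^ 3 / (t_f - t₀) ^ 3) + 3 * (t - t₀) ^ 2 / (t_f - t₀) ^ 2

/-- TFC switching function Ω₃ for two-point BVP constraints. -/
noncomputable def Omega3 (t₀ t_f t : ℝ) : ℝ :=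
  (t - t₀) + (t - t₀) ^ 3 / (t_f - t₀) ^ 2 - 2 * (t - t₀) ^ 2 / (t_f - t₀)

/-- TFC switching function Ω₄ for two-point BVP constraints. -/
noncomputable def Omega4 (t₀ t_f t : ℝ) : ℝ :=
  (t - t₀) ^ 3 / (t_f - t₀) ^ 2 - (t - t₀) ^ 2 / (t_f - t₀)

/-- TFC constrained expression for value/first-derivative constraints at t₀ and t_f. -/
noncomputable def constrainedExpr (t₀ t_f y₀ y_f v₀ v_f : ℝ) (g : ℝ → ℝ) : ℝ → ℝ :=
  fun t =>
    g t + Omega1 t₀ t_f t * (y₀ - g t₀) + Omega2 t₀ t_f t * (y_f - g t_f) +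
      Omega3 t₀ t_f t * (v₀ - deriv g t₀) + Omega4 t₀ t_f t * (v_f - deriv g t_f)

/-! The switching functions are the cubic Hermite basis on `[t₀, t_f]`: the values and first
derivatives of `Ω₁, Ω₂, Ω₃, Ω₄` at `t₀` and `t_f` form the identity matrix. Hence each constraint
applied to `y` returns `g`'s own value of it, corrected by exactly one of the four terms. -/

section SwitchingFunctions

variable {t₀ t_f : ℝ}

theorem hasDerivAt_Omega1 (t : ℝ) :
    HasDerivAt (Omega1 t₀ t_f)
      (6 * (t - t₀) ^ 2 / (t_f - t₀) ^ 3 - 6 * (t - t₀) / (t_f - t₀) ^ 2) t := by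
  have hs : HasDerivAt (fun x : ℝ => x - t₀) 1 t := (hasDerivAt_id t).sub_const t₀
  exact (((hasDerivAt_const t (1 : ℝ)).add
      (((hs.pow 3).const_mul 2).div_const ((t_f - t₀) ^ 3))).sub
      (((hs.pow 2).const_mul 3).div_const ((t_f - t₀) ^ 2))).congr_deriv (by ring)

theorem hasDerivAt_Omega2 (t : ℝ) :
    HasDerivAt (Omega2 t₀ t_f)
      (-(6 * (t - t₀) ^ 2 / (t_f - t₀) ^ 3) + 6 * (t - t₀) / (t_f - t₀) ^ 2) t := by
  have hs : HasDerivAt (fun x : ℝ => x - t₀) 1 t := (hasDerivAt_id t).sub_const t₀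
  exact ((((hs.pow 3).const_mul 2).div_const ((t_f - t₀) ^ 3)).neg.add
      (((hs.pow 2).const_mul 3).div_const ((t_f - t₀) ^ 2))).congr_deriv (by ring)

theorem hasDerivAt_Omega3 (t : ℝ) :
    HasDerivAt (Omega3 t₀ t_f)
      (1 + 3 * (t - t₀) ^ 2 / (t_f - t₀) ^ 2 - 4 * (t - t₀) / (t_f - t₀)) t := by
  have hs : HasDerivAt (fun x : ℝ => x - t₀) 1 t := (hasDerivAt_id t).sub_const t₀
  exact ((hs.add ((hs.pow 3).div_const ((t_f - t₀) ^ 2))).sub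
      (((hs.pow 2).const_mul 2).div_const (t_f - t₀))).congr_deriv (by ring)

theorem hasDerivAt_Omega4 (t : ℝ) :
    HasDerivAt (Omega4 t₀ t_f)
      (3 * (t - t₀) ^ 2 / (t_f - t₀) ^ 2 - 2 * (t - t₀) / (t_f - t₀)) t := by
  have hs : HasDerivAt (fun x : ℝ => x - t₀) 1 t := (hasDerivAt_id t).sub_const t₀
  exact (((hs.pow 3).div_const ((t_f - t₀) ^ 2)).sub
      ((hs.pow 2).div_const (t_f - t₀))).congr_deriv (by ring)

@[simp] theorem Omega1_left : Omega1 t₀ t_f t₀ = 1 := by simp [Omega1]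
@[simp] theorem Omega2_left : Omega2 t₀ t_f t₀ = 0 := by simp [Omega2]
@[simp] theorem Omega3_left : Omega3 t₀ t_f t₀ = 0 := by simp [Omega3]
@[simp] theorem Omega4_left : Omega4 t₀ t_f t₀ = 0 := by simp [Omega4]

@[simp] theorem deriv_Omega1_left : deriv (Omega1 t₀ t_f) t₀ = 0 := by
  simp [(hasDerivAt_Omega1 t₀).deriv]
@[simp] theorem deriv_Omega2_left : deriv (Omega2 t₀ t_f) t₀ = 0 := by
  simp [(hasDerivAt_Omega2 t₀).deriv]
@[simp] theorem deriv_Omega3_left : deriv (Omega3 t₀ t_f) t₀ = 1 := by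
  simp [(hasDerivAt_Omega3 t₀).deriv]
@[simp] theorem deriv_Omega4_left : deriv (Omega4 t₀ t_f) t₀ = 0 := by
  simp [(hasDerivAt_Omega4 t₀).deriv]

@[simp] theorem Omega1_right (h : t₀ ≠ t_f) : Omega1 t₀ t_f t_f = 0 := by
  simp only [Omega1]; field_simp [sub_ne_zero.2 h.symm]; ring

@[simp] theorem Omega2_right (h : t₀ ≠ t_f) : Omega2 t₀ t_f t_f = 1 := by
  simp only [Omega2]; field_simp [sub_ne_zero.2 h.symm]; ring

@[simp] theorem Omega3_right : Omega3 t₀ t_f t_f = 0 := by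
  simp only [Omega3]; field_simp; ring

@[simp] theorem Omega4_right : Omega4 t₀ t_f t_f = 0 := by
  simp only [Omega4]; field_simp; ring

@[simp] theorem deriv_Omega1_right (h : t₀ ≠ t_f) : deriv (Omega1 t₀ t_f) t_f = 0 := by
  rw [(hasDerivAt_Omega1 t_f).deriv]; field_simp [sub_ne_zero.2 h.symm]; ring

@[simp] theorem deriv_Omega2_right (h : t₀ ≠ t_f) : deriv (Omega2 t₀ t_f) t_f = 0 := by
  rw [(hasDerivAt_Omega2 t_f).deriv]; field_simp [sub_ne_zero.2 h.symm]; ring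

@[simp] theorem deriv_Omega3_right (h : t₀ ≠ t_f) : deriv (Omega3 t₀ t_f) t_f = 0 := by
  rw [(hasDerivAt_Omega3 t_f).deriv]; field_simp [sub_ne_zero.2 h.symm]; ring

@[simp] theorem deriv_Omega4_right (h : t₀ ≠ t_f) : deriv (Omega4 t₀ t_f) t_f = 1 := by
  rw [(hasDerivAt_Omega4 t_f).deriv]; field_simp [sub_ne_zero.2 h.symm]; ring

end SwitchingFunctions

theorem hasDerivAt_constrainedExpr {t₀ t_f y₀ y_f v₀ v_f : ℝ} {g : ℝ → ℝ} {t : ℝ}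
    (hg : DifferentiableAt ℝ g t) :
    HasDerivAt (constrainedExpr t₀ t_f y₀ y_f v₀ v_f g)
      (deriv g t + deriv (Omega1 t₀ t_f) t * (y₀ - g t₀)
        + deriv (Omega2 t₀ t_f) t * (y_f - g t_f)
        + deriv (Omega3 t₀ t_f) t * (v₀ - deriv g t₀)
        + deriv (Omega4 t₀ t_f) t * (v_f - deriv g t_f)) t := by
  have hΩ₁ := (hasDerivAt_Omega1 (t₀ := t₀) (t_f := t_f) t).differentiableAt.hasDerivAt
  have hΩ₂ := (hasDerivAt_Omega2 (t₀ := t₀) (t_f := t_f) t).differentiableAt.hasDerivAt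
  have hΩ₃ := (hasDerivAt_Omega3 (t₀ := t₀) (t_f := t_f) t).differentiableAt.hasDerivAt
  have hΩ₄ := (hasDerivAt_Omega4 (t₀ := t₀) (t_f := t_f) t).differentiableAt.hasDerivAt
  exact (((hg.hasDerivAt.add (hΩ₁.mul_const _)).add (hΩ₂.mul_const _)).add
    (hΩ₃.mul_const _)).add (hΩ₄.mul_const _)

theorem constrainedExpr_satisfies_constraints (t₀ t_f : ℝ) (h : t₀ ≠ t_f)
    (y₀ y_f v₀ v_f : ℝ) (g : ℝ → ℝ) (hg : Differentiable ℝ g) :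
    Differentiable ℝ (constrainedExpr t₀ t_f y₀ y_f v₀ v_f g) ∧
    constrainedExpr t₀ t_f y₀ y_f v₀ v_f g t₀ = y₀ ∧
    constrainedExpr t₀ t_f y₀ y_f v₀ v_f g t_f = y_f ∧
    deriv (constrainedExpr t₀ t_f y₀ y_f v₀ v_f g) t₀ = v₀ ∧
    deriv (constrainedExpr t₀ t_f y₀ y_f v₀ v_f g) t_f = v_f := by
  refine ⟨fun t => (hasDerivAt_constrainedExpr (hg t)).differentiableAt, ?_, ?_, ?_, ?_⟩
  · simp [constrainedExpr]
  · simp [constrainedExpr, h]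
  · simp [(hasDerivAt_constrainedExpr (hg t₀)).deriv]
  · simp [(hasDerivAt_constrainedExpr (hg t_f)).deriv, h]
end

section
/- Let t₀ ≠ t_f be real numbers and y₀, y_f, v₀, v_f ∈ ℝ. The set of constrained expressions obtained as g ranges over all differentiable functions ℝ → ℝ is exactly the set of differentiable functions y : ℝ → ℝ satisfying y(t₀) = y₀, y(t_f) = y_f, y′(t₀) = v₀, y′(t_f) = v_f. In particular, every differentiable y satisfying these four boundary conditions equals the constrained expression obtained by choosing the free function g = y. -/
/-!
The constrained expression is `g` plus the cubic Hermite interpolant of the residuals of `g`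
at `t₀` and `t_f`. The switching functions form the Hermite basis (each has value or slope `1`
at exactly one endpoint and `0` elsewhere), so this correction cancels the residuals exactly,
and it vanishes when `g` already satisfies the boundary conditions.
-/

/-- Values `a`, `b` and slopes `c`, `d` at `t₀`, `t_f`. -/
noncomputable def cubicHermite (t₀ t_f a b c d t : ℝ) : ℝ :=
  Omega1 t₀ t_f t * a + Omega2 t₀ t_f t * b + Omega3 t₀ t_f t * c + Omega4 t₀ t_f t * d

theorem hasDerivAt_cubic_sub (a c p q t₀ t : ℝ) :
    HasDerivAt (fun s => a + c * (s - t₀) + p * (s - t₀) ^ 2 + q * (s - t₀) ^ 3)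
      (c + 2 * p * (t - t₀) + 3 * q * (t - t₀) ^ 2) t := by
  have hs : HasDerivAt (fun s : ℝ => s - t₀) 1 t := (hasDerivAt_id t).sub_const t₀
  refine ((((hs.const_mul c).const_add a).add ((hs.pow 2).const_mul p)).add
    ((hs.pow 3).const_mul q)).congr_deriv ?_
  norm_num
  ring

section CubicHermite

variable (t₀ t_f a b c d : ℝ)

theorem cubicHermite_eq_taylor (t : ℝ) :
    cubicHermite t₀ t_f a b c d t =
      a + c * (t - t₀) + (3 * (b - a) / (t_f - t₀) - 2 * c - d) / (t_f - t₀) * (t - t₀) ^ 2 +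
        (2 * (a - b) / (t_f - t₀) + c + d) / (t_f - t₀) ^ 2 * (t - t₀) ^ 3 := by
  simp only [cubicHermite, Omega1, Omega2, Omega3, Omega4]
  generalize t - t₀ = s
  generalize t_f - t₀ = Δ
  ring

theorem hasDerivAt_cubicHermite (t : ℝ) :
    HasDerivAt (cubicHermite t₀ t_f a b c d)
      (c + 2 * ((3 * (b - a) / (t_f - t₀) - 2 * c - d) / (t_f - t₀)) * (t - t₀) +
        3 * ((2 * (a - b) / (t_f - t₀) + c + d) / (t_f - t₀) ^ 2) * (t - t₀) ^ 2) t := by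
  rw [show cubicHermite t₀ t_f a b c d = _ from funext (cubicHermite_eq_taylor t₀ t_f a b c d)]
  exact hasDerivAt_cubic_sub ..

theorem differentiable_cubicHermite : Differentiable ℝ (cubicHermite t₀ t_f a b c d) :=
  fun t => (hasDerivAt_cubicHermite t₀ t_f a b c d t).differentiableAt

@[simp]
theorem cubicHermite_zero : cubicHermite t₀ t_f 0 0 0 0 = 0 := by
  funext t
  simp [cubicHermite]

theorem cubicHermite_left : cubicHermite t₀ t_f a b c d t₀ = a := by
  simp [cubicHermite_eq_taylor]

theorem deriv_cubicHermite_left : deriv (cubicHermite t₀ t_f a b c d) t₀ = c := by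
  simp [(hasDerivAt_cubicHermite t₀ t_f a b c d t₀).deriv]

variable {t₀ t_f}

theorem cubicHermite_right (h : t₀ ≠ t_f) : cubicHermite t₀ t_f a b c d t_f = b := by
  have hΔ : t_f - t₀ ≠ 0 := sub_ne_zero.mpr h.symm
  rw [cubicHermite_eq_taylor]
  field_simp
  ring

theorem deriv_cubicHermite_right (h : t₀ ≠ t_f) : deriv (cubicHermite t₀ t_f a b c d) t_f = d := by
  have hΔ : t_f - t₀ ≠ 0 := sub_ne_zero.mpr h.symm
  rw [(hasDerivAt_cubicHermite t₀ t_f a b c d t_f).deriv]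
  field_simp
  ring

end CubicHermite

section ConstrainedExpr

variable {t₀ t_f y₀ y_f v₀ v_f : ℝ} {g : ℝ → ℝ}

theorem constrainedExpr_eq_add_cubicHermite :
    constrainedExpr t₀ t_f y₀ y_f v₀ v_f g =
      g + cubicHermite t₀ t_f (y₀ - g t₀) (y_f - g t_f) (v₀ - deriv g t₀) (v_f - deriv g t_f) := by
  funext t
  simp only [constrainedExpr, cubicHermite, Pi.add_apply]
  ring

theorem constrainedExpr_eq_self (h₀ : g t₀ = y₀) (h_f : g t_f = y_f)
    (h₀' : deriv g t₀ = v₀) (h_f' : deriv g t_f = v_f) :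
    constrainedExpr t₀ t_f y₀ y_f v₀ v_f g = g := by
  simp [constrainedExpr_eq_add_cubicHermite, h₀, h_f, h₀', h_f']

theorem constrainedExpr_admissible (h : t₀ ≠ t_f) (hg : Differentiable ℝ g) :
    Differentiable ℝ (constrainedExpr t₀ t_f y₀ y_f v₀ v_f g) ∧
      constrainedExpr t₀ t_f y₀ y_f v₀ v_f g t₀ = y₀ ∧
      constrainedExpr t₀ t_f y₀ y_f v₀ v_f g t_f = y_f ∧
      deriv (constrainedExpr t₀ t_f y₀ y_f v₀ v_f g) t₀ = v₀ ∧
      deriv (constrainedExpr t₀ t_f y₀ y_f v₀ v_f g) t_f = v_f := by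
  have hH := differentiable_cubicHermite t₀ t_f (y₀ - g t₀) (y_f - g t_f)
    (v₀ - deriv g t₀) (v_f - deriv g t_f)
  rw [constrainedExpr_eq_add_cubicHermite]
  refine ⟨hg.add hH, ?_, ?_, ?_, ?_⟩
  · simp [cubicHermite_left]
  · simp [cubicHermite_right _ _ _ _ h]
  · rw [deriv_add (hg t₀) (hH t₀), deriv_cubicHermite_left]
    ring
  · rw [deriv_add (hg t_f) (hH t_f), deriv_cubicHermite_right _ _ _ _ h]
    ring

end ConstrainedExpr

theorem constrainedExpr_range_eq_admissible_set (t₀ t_f : ℝ) (h : t₀ ≠ t_f)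
    (y₀ y_f v₀ v_f : ℝ) :
    {y : ℝ → ℝ | ∃ g : ℝ → ℝ, Differentiable ℝ g ∧
        y = constrainedExpr t₀ t_f y₀ y_f v₀ v_f g} =
      {y : ℝ → ℝ | Differentiable ℝ y ∧ y t₀ = y₀ ∧ y t_f = y_f ∧
        deriv y t₀ = v₀ ∧ deriv y t_f = v_f} ∧
    ∀ y : ℝ → ℝ, Differentiable ℝ y → y t₀ = y₀ → y t_f = y_f →
      deriv y t₀ = v₀ → deriv y t_f = v_f →
        y = constrainedExpr t₀ t_f y₀ y_f v₀ v_f y := by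
  refine ⟨Set.ext fun y => ⟨?_, ?_⟩, fun y _ h₀ h_f h₀' h_f' =>
    (constrainedExpr_eq_self h₀ h_f h₀' h_f').symm⟩
  · rintro ⟨g, hg, rfl⟩
    exact constrainedExpr_admissible h hg
  · rintro ⟨hy, h₀, h_f, h₀', h_f'⟩
    exact ⟨y, hy, (constrainedExpr_eq_self h₀ h_f h₀' h_f').symm⟩
end

section
/- Let λ_r, λ_v, v, a_g ∈ ℝ³ (with the Euclidean inner product and norm), let α > 0, m > 0, λ_m ∈ ℝ, 0 < T_min < T_max, and assume λ_v ≠ 0. Define H(T, u) = αT + ⟨λ_r, v⟩ + ⟨λ_v, a_g + (T/m)u⟩ − λ_m α T for T ∈ [T_min, T_max] and unit vectors u ∈ ℝ³, and set σ = α − ‖λ_v‖/m − αλ_m. If σ < 0, then H attains its minimum over [T_min, T_max] × {u : ‖u‖ = 1} at (T, u) = (T_max, −λ_v/‖λ_v‖); if σ > 0, the minimum is attained at (T, u) = (T_min, −λ_v/‖λ_v‖). -/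
/-!
For fixed `T` the Hamiltonian depends on `u` only through `(T / m) ⟪λ_v, u⟫`, which by
Cauchy–Schwarz is smallest, equal to `-(T / m) ‖λ_v‖`, at `u = -λ_v / ‖λ_v‖`. With this
direction the Hamiltonian is `σ T` plus a constant, so its minimum over `[T_min, T_max]`
sits at the right endpoint when `σ < 0` and at the left one when `σ > 0`.
-/

open RealInnerProductSpace

section

variable {F : Type*} [NormedAddCommGroup F] [InnerProductSpace ℝ F]

theorem real_inner_neg_inv_norm_smul_self (x : F) : ⟪x, -(‖x‖⁻¹ • x)⟫ = -‖x‖ := by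
  rcases eq_or_ne x 0 with rfl | hx
  · simp
  rw [inner_neg_right, real_inner_smul_self_right, ← mul_assoc,
    inv_mul_cancel₀ (norm_ne_zero_iff.mpr hx), one_mul]

theorem neg_norm_le_real_inner_of_norm_eq_one (x : F) {u : F} (hu : ‖u‖ = 1) :
    -‖x‖ ≤ ⟪x, u⟫ := by
  simpa [hu] using neg_le_of_abs_le (abs_real_inner_le_norm x u)

theorem real_inner_neg_inv_norm_smul_le (x : F) {u : F} (hu : ‖u‖ = 1) :
    ⟪x, -(‖x‖⁻¹ • x)⟫ ≤ ⟪x, u⟫ :=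
  (real_inner_neg_inv_norm_smul_self x).trans_le (neg_norm_le_real_inner_of_norm_eq_one x hu)

end

theorem hamiltonian_pointwise_minimum_general
    (lam_r lam_v v a_g : EuclideanSpace ℝ (Fin 3)) (α m lam_m T_min T_max : ℝ)
    (hm : 0 < m) (hT : 0 < T_min)
    (hlv : lam_v ≠ 0) :
    let H : ℝ → EuclideanSpace ℝ (Fin 3) → ℝ := fun T u =>
      α * T + (inner ℝ lam_r v : ℝ) + (inner ℝ lam_v (a_g + (T / m) • u) : ℝ) - lam_m * α * T
    let σ : ℝ := α - ‖lam_v‖ / m - α * lam_m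
    let u_opt : EuclideanSpace ℝ (Fin 3) := -(‖lam_v‖⁻¹ • lam_v)
    ‖u_opt‖ = 1 ∧
    (σ < 0 → ∀ T ∈ Set.Icc T_min T_max, ∀ u : EuclideanSpace ℝ (Fin 3), ‖u‖ = 1 →
      H T_max u_opt ≤ H T u) ∧
    (σ > 0 → ∀ T ∈ Set.Icc T_min T_max, ∀ u : EuclideanSpace ℝ (Fin 3), ‖u‖ = 1 →
      H T_min u_opt ≤ H T u) := by
  intro H σ u_opt
  set c := ⟪lam_r, v⟫ + ⟪lam_v, a_g⟫
  have H_eq (T : ℝ) (u : EuclideanSpace ℝ (Fin 3)) :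
      H T u = (α - lam_m * α) * T + T / m * ⟪lam_v, u⟫ + c := by
    simp only [H, c, inner_add_right, real_inner_smul_right]
    ring
  have H_opt (T : ℝ) : H T u_opt = σ * T + c := by
    rw [H_eq, real_inner_neg_inv_norm_smul_self]
    ring
  have H_opt_le {T : ℝ} (hT' : T_min ≤ T) {u : EuclideanSpace ℝ (Fin 3)} (hu : ‖u‖ = 1) :
      H T u_opt ≤ H T u := by
    have hTm : 0 ≤ T / m := div_nonneg (hT.le.trans hT') hm.le
    rw [H_eq, H_eq]
    gcongr
    exact real_inner_neg_inv_norm_smul_le lam_v hu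
  refine ⟨by simpa [u_opt] using norm_smul_inv_norm (𝕜 := ℝ) hlv, ?_, ?_⟩
  · rintro hσ T ⟨hT_min, hT_max⟩ u hu
    calc H T_max u_opt ≤ H T u_opt := by rw [H_opt, H_opt]; nlinarith
      _ ≤ H T u := H_opt_le hT_min hu
  · rintro hσ T ⟨hT_min, -⟩ u hu
    calc H T_min u_opt ≤ H T u_opt := by rw [H_opt, H_opt]; nlinarith
      _ ≤ H T u := H_opt_le hT_min hu

theorem hamiltonian_pointwise_minimum
    (lam_r lam_v v a_g : EuclideanSpace ℝ (Fin 3)) (α m lam_m T_min T_max : ℝ)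
    (hα : 0 < α) (hm : 0 < m) (hT : 0 < T_min) (hTT : T_min < T_max)
    (hlv : lam_v ≠ 0) :
    let H : ℝ → EuclideanSpace ℝ (Fin 3) → ℝ := fun T u =>
      α * T + (inner ℝ lam_r v : ℝ) + (inner ℝ lam_v (a_g + (T / m) • u) : ℝ) - lam_m * α * T
    let σ : ℝ := α - ‖lam_v‖ / m - α * lam_m
    let u_opt : EuclideanSpace ℝ (Fin 3) := -(‖lam_v‖⁻¹ • lam_v)
    ‖u_opt‖ = 1 ∧
    (σ < 0 → ∀ T ∈ Set.Icc T_min T_max, ∀ u : EuclideanSpace ℝ (Fin 3), ‖u‖ = 1 →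
      H T_max u_opt ≤ H T u) ∧
    (σ > 0 → ∀ T ∈ Set.Icc T_min T_max, ∀ u : EuclideanSpace ℝ (Fin 3), ‖u‖ = 1 →
      H T_min u_opt ≤ H T u) :=
  hamiltonian_pointwise_minimum_general lam_r lam_v v a_g α m lam_m T_min T_max hm hT hlv
end
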